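/- arXiv:1507.05314 — 4 statements merged into one kernel-verified Lean document; each statement's English description precedes it below -/
import Mathlib

section
/- (Proposition 1: su(2) embedding) Let N ≥ 2 be an integer, k ∈ {−1,0,1}, ℓ̃ > 0, and set λ_N = √(N(N²−1)/6). Suppose m̃, S̃, α, ω are twice continuously differentiable real functions on an interval Ĩ ⊆ (0,∞) with S̃ > 0 and μ̃(R) := k − 2m̃(R)/R + R²/ℓ̃² ≠ 0 on Ĩ, satisfying the su(2) dyonic EYM system: dm̃/dR = R²(dα/dR)²/(2S̃²) + ω²α²/(μ̃S̃²) + μ̃(dω/dR)² + (ω²−k)²/(2R²); (1/S̃)dS̃/dR = 2ω²α²/(μ̃²S̃²R) + (2/R)(dω/dR)²; d²α/dR² = ((1/S̃)dS̃/dR − 2/R)(dα/dR) + 2ω²α/(μ̃R²); d²ω/dR² = −((1/μ̃)dμ̃/dR + (1/S̃)dS̃/dR)(dω/dR) − α²ω/(μ̃²S̃²) − ω(k−ω²)/(μ̃R²). Then, with ℓ = λ_N ℓ̃, the rescaled functions m(r) = λ_N m̃(r/λ_N), S(r) = λ_N S̃(r/λ_N), ω_j(r) = √(j(N−j)) ω(r/λ_N)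 for j = 1,…,N−1, and α_j(r) = (N+1−2j) α(r/λ_N) for j = 1,…,N, satisfy the su(N) dyonic EYM field equations (EE1), (EE2), (YM1), (YM2) and the constraint Σ_{j=1}^N α_j ≡ 0 on the interval λ_N Ĩ = {λ_N R : R ∈ Ĩ}. -/
open scoped BigOperators

noncomputable section

namespace EYM

/-- The metric function `μ(r) = k - 2 m(r)/r + r²/ℓ²`. -/
def mu (k ℓ : ℝ) (m : ℝ → ℝ) (r : ℝ) : ℝ :=
  k - 2 * m r / r + r ^ 2 / ℓ ^ 2

/-- `η(r) = Σ_{j=1}^N α_j′(r)²`. -/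
def eta (N : ℕ) (α : ℕ → ℝ → ℝ) (r : ℝ) : ℝ :=
  ∑ j ∈ Finset.Icc 1 N, (deriv (α j) r) ^ 2

/-- `ζ(r) = Σ_{j=1}^{N-1} ω_j(r)² (α_j(r) - α_{j+1}(r))²`. -/
def zeta (N : ℕ) (ω α : ℕ → ℝ → ℝ) (r : ℝ) : ℝ :=
  ∑ j ∈ Finset.Icc 1 (N - 1), (ω j r) ^ 2 * (α j r - α (j + 1) r) ^ 2

/-- `G(r) = Σ_{j=1}^{N-1} ω_j′(r)²`. -/
def Gf (N : ℕ) (ω : ℕ → ℝ → ℝ) (r : ℝ) : ℝ :=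
  ∑ j ∈ Finset.Icc 1 (N - 1), (deriv (ω j) r) ^ 2

/-- `P(r) = (1/(4r²)) Σ_{j=1}^N (ω_j² - ω_{j-1}² - k(N+1-2j))²`. -/
def Pf (N : ℕ) (k : ℝ) (ω : ℕ → ℝ → ℝ) (r : ℝ) : ℝ :=
  (1 / (4 * r ^ 2)) *
    ∑ j ∈ Finset.Icc 1 N,
      ((ω j r) ^ 2 - (ω (j - 1) r) ^ 2 - k * ((N : ℝ) + 1 - 2 * (j : ℝ))) ^ 2

/-- `W_j(r) = k - ω_j² + (ω_{j+1}² + ω_{j-1}²)/2`. -/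
def Wf (k : ℝ) (ω : ℕ → ℝ → ℝ) (j : ℕ) (r : ℝ) : ℝ :=
  k - (ω j r) ^ 2 + ((ω (j + 1) r) ^ 2 + (ω (j - 1) r) ^ 2) / 2

/-- The conventions `ω_0 ≡ ω_N ≡ 0` and `α_0 ≡ α_{N+1} ≡ 0`. -/
def Conventions (N : ℕ) (ω α : ℕ → ℝ → ℝ) : Prop :=
  (∀ r, ω 0 r = 0) ∧ (∀ r, ω N r = 0) ∧ (∀ r, α 0 r = 0) ∧ (∀ r, α (N + 1) r = 0)

/-- The constraint `Σ_{j=1}^N α_j ≡ 0`. -/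
def Constraint (N : ℕ) (α : ℕ → ℝ → ℝ) : Prop :=
  ∀ r, ∑ j ∈ Finset.Icc 1 N, α j r = 0

/-- The su(N) dyonic Einstein–Yang–Mills field equations (EE1), (EE2), (YM1), (YM2)
at radius `r`. -/
def FieldEqsAt (N : ℕ) (k ℓ : ℝ) (m S : ℝ → ℝ) (ω α : ℕ → ℝ → ℝ) (r : ℝ) : Prop :=
  (deriv m r =
      r ^ 2 * eta N α r / (4 * S r ^ 2) + zeta N ω α r / (4 * mu k ℓ m r * S r ^ 2)
        + mu k ℓ m r * Gf N ω r + Pf N k ω r) ∧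
  (deriv S r / S r =
      zeta N ω α r / (2 * mu k ℓ m r ^ 2 * S r ^ 2 * r) + 2 * Gf N ω r / r) ∧
  (∀ j, 1 ≤ j → j ≤ N →
      deriv (deriv (α j)) r =
        (deriv S r / S r - 2 / r) * deriv (α j) r
          + (1 / (mu k ℓ m r * r ^ 2)) *
            ((ω j r) ^ 2 * (α j r - α (j + 1) r)
              - (ω (j - 1) r) ^ 2 * (α (j - 1) r - α j r))) ∧
  (∀ j, 1 ≤ j → j ≤ N - 1 →
      deriv (deriv (ω j)) r =
        -(deriv S r / S r + deriv (mu k ℓ m) r / mu k ℓ m r) * deriv (ω j) r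
          - ω j r * (α j r - α (j + 1) r) ^ 2 / (4 * mu k ℓ m r ^ 2 * S r ^ 2)
          - Wf k ω j r * ω j r / (mu k ℓ m r * r ^ 2))

end EYM

section Su2Aux

open Filter

lemma su2aux_pack (f : ℝ → ℝ) (x : ℝ) (h : ContDiffAt ℝ 2 f x) :
    (∀ᶠ y in nhds x, DifferentiableAt ℝ f y) ∧ DifferentiableAt ℝ (deriv f) x := by
  obtain ⟨u, hu, hcd⟩ := h.contDiffOn (le_refl 2) (by simp)
  have hxo : x ∈ interior u := mem_interior_iff_mem_nhds.mpr hu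
  have hcd' : ContDiffOn ℝ 2 f (interior u) := hcd.mono interior_subset
  have h2 : ContDiffOn ℝ ((1 : WithTop ℕ∞) + 1) f (interior u) := by
    convert hcd' using 2
    exact one_add_one_eq_two
  rw [contDiffOn_succ_iff_deriv_of_isOpen isOpen_interior] at h2
  constructor
  · filter_upwards [isOpen_interior.mem_nhds hxo] with y hy
    exact (h2.1 y hy).differentiableAt (isOpen_interior.mem_nhds hy)
  · exact ((h2.2.2.differentiableOn one_ne_zero) x hxo).differentiableAt
      (isOpen_interior.mem_nhds hxo)

lemma su2aux_deriv_scale (f : ℝ → ℝ) (c lam : ℝ) (x : ℝ)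
    (hf : DifferentiableAt ℝ f (x / lam)) :
    deriv (fun y => c * f (y / lam)) x = c / lam * deriv f (x / lam) := by
  have h1 : HasDerivAt (fun y : ℝ => y / lam) (1 / lam) x := (hasDerivAt_id x).div_const lam
  have h2 := (hf.hasDerivAt.comp x h1).const_mul c
  simp only [Function.comp_def] at h2
  rw [h2.deriv]; ring

lemma su2aux_deriv_scale0 (f : ℝ → ℝ) (lam : ℝ) (x : ℝ)
    (hf : DifferentiableAt ℝ f (x / lam)) :
    deriv (fun y => f (y / lam)) x = deriv f (x / lam) / lam := by
  have h1 : HasDerivAt (fun y : ℝ => y / lam) (1 / lam) x := (hasDerivAt_id x).div_const lam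
  have h2 := hf.hasDerivAt.comp x h1
  simp only [Function.comp_def] at h2
  rw [h2.deriv]; ring

lemma su2aux_deriv2_scale (f : ℝ → ℝ) (c lam : ℝ) (x : ℝ)
    (hf : ContDiffAt ℝ 2 f (x / lam)) :
    deriv (deriv (fun y => c * f (y / lam))) x = c / lam ^ 2 * deriv (deriv f) (x / lam) := by
  obtain ⟨hev, hd⟩ := su2aux_pack f (x / lam) hf
  have hcont : ContinuousAt (fun y : ℝ => y / lam) x := (continuous_id.div_const lam).continuousAt
  have hev2 : ∀ᶠ y in nhds x, DifferentiableAt ℝ f (y / lam) := hcont.tendsto.eventually hev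
  have heq : deriv (fun y => c * f (y / lam)) =ᶠ[nhds x] fun y => c / lam * deriv f (y / lam) :=
    hev2.mono fun y hy => su2aux_deriv_scale f c lam y hy
  rw [heq.deriv_eq, su2aux_deriv_scale (deriv f) (c / lam) lam x hd]; ring

lemma su2aux_sum_Icc_id (n : ℕ) : ∑ j ∈ Finset.Icc 1 n, (j : ℝ) = n * (n + 1) / 2 := by
  induction n with
  | zero => simp
  | succ n ih =>
    rw [Finset.sum_Icc_succ_top (by omega), ih]
    push_cast; ring

lemma su2aux_sum_Icc_sq (n : ℕ) :
    ∑ j ∈ Finset.Icc 1 n, (j : ℝ) ^ 2 = n * (n + 1) * (2 * n + 1) / 6 := by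
  induction n with
  | zero => simp
  | succ n ih =>
    rw [Finset.sum_Icc_succ_top (by omega), ih]
    push_cast; ring

lemma su2aux_sum_coeff (n : ℕ) : ∑ j ∈ Finset.Icc 1 n, ((n : ℝ) + 1 - 2 * (j : ℝ)) = 0 := by
  have h : ∀ j ∈ Finset.Icc 1 n, ((n : ℝ) + 1 - 2 * (j : ℝ))
      = ((n : ℝ) + 1) - 2 * (j : ℝ) := fun j _ => by ring
  rw [Finset.sum_congr rfl h, Finset.sum_sub_distrib, ← Finset.mul_sum, Finset.sum_const,
    Nat.card_Icc, su2aux_sum_Icc_id]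
  simp only [Nat.add_sub_cancel, nsmul_eq_mul]
  ring

lemma su2aux_sum_coeff_sq (n : ℕ) :
    ∑ j ∈ Finset.Icc 1 n, ((n : ℝ) + 1 - 2 * (j : ℝ)) ^ 2 = n * ((n : ℝ) ^ 2 - 1) / 3 := by
  have h : ∀ j ∈ Finset.Icc 1 n, ((n : ℝ) + 1 - 2 * (j : ℝ)) ^ 2
      = (((n : ℝ) + 1) ^ 2 - (4 * ((n : ℝ) + 1)) * (j : ℝ)) + 4 * (j : ℝ) ^ 2 :=
    fun j _ => by ring
  rw [Finset.sum_congr rfl h, Finset.sum_add_distrib, Finset.sum_sub_distrib,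
    ← Finset.mul_sum, ← Finset.mul_sum, Finset.sum_const, Nat.card_Icc, su2aux_sum_Icc_id,
    su2aux_sum_Icc_sq]
  simp only [Nat.add_sub_cancel, nsmul_eq_mul]
  ring

lemma su2aux_sum_jNj (n : ℕ) (hn : 1 ≤ n) :
    ∑ j ∈ Finset.Icc 1 (n - 1), (j : ℝ) * ((n : ℝ) - (j : ℝ)) = n * ((n : ℝ) ^ 2 - 1) / 6 := by
  obtain ⟨m, rfl⟩ : ∃ m, n = m + 1 := ⟨n - 1, by omega⟩
  simp only [Nat.add_sub_cancel]
  push_cast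
  have h : ∀ j ∈ Finset.Icc 1 m, (j : ℝ) * ((m : ℝ) + 1 - (j : ℝ))
      = (((m : ℝ) + 1) * (j : ℝ)) - (j : ℝ) ^ 2 := fun j _ => by ring
  rw [Finset.sum_congr rfl h, Finset.sum_sub_distrib, ← Finset.mul_sum, su2aux_sum_Icc_id,
    su2aux_sum_Icc_sq]
  push_cast; ring

end Su2Aux

set_option maxHeartbeats 1000000 in
/-- Proposition 1 (su(2) embedding): any solution of the su(2) dyonic EYM system on an
interval `Ĩ ⊆ (0,∞)` rescales to a solution of the su(N) dyonic EYM field equations. -/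
theorem su2_embedding
    (N : ℕ) (hN : 2 ≤ N) (k : ℝ) (hk : k = -1 ∨ k = 0 ∨ k = 1)
    (ℓt : ℝ) (hℓt : 0 < ℓt)
    (I : Set ℝ) (hI : I ⊆ Set.Ioi (0 : ℝ))
    (mt St a w : ℝ → ℝ)
    (hsm : ∀ R ∈ I, ContDiffAt ℝ 2 mt R) (hsS : ∀ R ∈ I, ContDiffAt ℝ 2 St R)
    (hsa : ∀ R ∈ I, ContDiffAt ℝ 2 a R) (hsw : ∀ R ∈ I, ContDiffAt ℝ 2 w R)
    (hSpos : ∀ R ∈ I, 0 < St R)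
    (hμne : ∀ R ∈ I, EYM.mu k ℓt mt R ≠ 0)
    (hEE1 : ∀ R ∈ I, deriv mt R =
        R ^ 2 * (deriv a R) ^ 2 / (2 * St R ^ 2)
          + (w R) ^ 2 * (a R) ^ 2 / (EYM.mu k ℓt mt R * St R ^ 2)
          + EYM.mu k ℓt mt R * (deriv w R) ^ 2 + ((w R) ^ 2 - k) ^ 2 / (2 * R ^ 2))
    (hEE2 : ∀ R ∈ I, deriv St R / St R =
        2 * (w R) ^ 2 * (a R) ^ 2 / (EYM.mu k ℓt mt R ^ 2 * St R ^ 2 * R)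
          + (2 / R) * (deriv w R) ^ 2)
    (hYM1 : ∀ R ∈ I, deriv (deriv a) R =
        (deriv St R / St R - 2 / R) * deriv a R
          + 2 * (w R) ^ 2 * a R / (EYM.mu k ℓt mt R * R ^ 2))
    (hYM2 : ∀ R ∈ I, deriv (deriv w) R =
        -(deriv (EYM.mu k ℓt mt) R / EYM.mu k ℓt mt R + deriv St R / St R) * deriv w R
          - (a R) ^ 2 * w R / (EYM.mu k ℓt mt R ^ 2 * St R ^ 2)
          - w R * (k - (w R) ^ 2) / (EYM.mu k ℓt mt R * R ^ 2)) :
    let lamN : ℝ := Real.sqrt ((N : ℝ) * ((N : ℝ) ^ 2 - 1) / 6)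
    let mN : ℝ → ℝ := fun r => lamN * mt (r / lamN)
    let SN : ℝ → ℝ := fun r => lamN * St (r / lamN)
    let ωN : ℕ → ℝ → ℝ := fun j r => Real.sqrt ((j : ℝ) * ((N : ℝ) - (j : ℝ))) * w (r / lamN)
    let αN : ℕ → ℝ → ℝ := fun j r =>
      if j = 0 ∨ j = N + 1 then 0 else ((N : ℝ) + 1 - 2 * (j : ℝ)) * a (r / lamN)
    EYM.Conventions N ωN αN ∧ EYM.Constraint N αN ∧
      ∀ R ∈ I, EYM.FieldEqsAt N k (lamN * ℓt) mN SN ωN αN (lamN * R) := by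
  intro lamN mN SN ωN αN
  have hN2 : (2 : ℝ) ≤ (N : ℝ) := by exact_mod_cast hN
  have hT : (0 : ℝ) < (N : ℝ) * ((N : ℝ) ^ 2 - 1) / 6 := by nlinarith
  have hlam : 0 < lamN := Real.sqrt_pos.mpr hT
  have hlamne : lamN ≠ 0 := ne_of_gt hlam
  have hlam2 : lamN ^ 2 = (N : ℝ) * ((N : ℝ) ^ 2 - 1) / 6 := Real.sq_sqrt hT.le
  have h6 : (N : ℝ) * ((N : ℝ) ^ 2 - 1) = 6 * lamN ^ 2 := by rw [hlam2]; ring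
  have hωf : ∀ j : ℕ,
      ωN j = fun r => Real.sqrt ((j : ℝ) * ((N : ℝ) - (j : ℝ))) * w (r / lamN) := fun _ => rfl
  have hαf : ∀ j : ℕ, ¬(j = 0 ∨ j = N + 1) →
      αN j = fun r => ((N : ℝ) + 1 - 2 * (j : ℝ)) * a (r / lamN) := by
    intro j hj
    funext r
    show (if j = 0 ∨ j = N + 1 then (0:ℝ) else ((N : ℝ) + 1 - 2 * (j : ℝ)) * a (r / lamN)) = _
    exact if_neg hj
  have hconv1 : ∀ r, ωN 0 r = 0 := by
    intro r
    show Real.sqrt (((0:ℕ) : ℝ) * ((N : ℝ) - ((0:ℕ) : ℝ))) * w (r / lamN) = 0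
    simp
  have hconv2 : ∀ r, ωN N r = 0 := by
    intro r
    show Real.sqrt ((N : ℝ) * ((N : ℝ) - (N : ℝ))) * w (r / lamN) = 0
    simp
  have hconv3 : ∀ r, αN 0 r = 0 := by
    intro r
    show (if (0:ℕ) = 0 ∨ (0:ℕ) = N + 1 then (0:ℝ) else _) = 0
    simp
  have hconv4 : ∀ r, αN (N + 1) r = 0 := by
    intro r
    show (if N + 1 = 0 ∨ N + 1 = N + 1 then (0:ℝ) else _) = 0
    simp
  have hconstraint : EYM.Constraint N αN := by
    intro r
    have h1 : ∀ j ∈ Finset.Icc 1 N, αN j r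
        = ((N : ℝ) + 1 - 2 * (j : ℝ)) * a (r / lamN) := by
      intro j hj
      simp only [Finset.mem_Icc] at hj
      rw [hαf j (by omega)]
    rw [Finset.sum_congr rfl h1, ← Finset.sum_mul, su2aux_sum_coeff, zero_mul]
  refine ⟨⟨hconv1, hconv2, hconv3, hconv4⟩, hconstraint, ?_⟩
  intro R hR
  have hR0 : 0 < R := hI hR
  have hRne : R ≠ 0 := ne_of_gt hR0
  have hrR : lamN * R / lamN = R := by field_simp
  have hμt : EYM.mu k ℓt mt R ≠ 0 := hμne R hR
  have hStpos := hSpos R hR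
  have hStne : St R ≠ 0 := ne_of_gt hStpos
  have hma : DifferentiableAt ℝ mt R := (hsm R hR).differentiableAt two_ne_zero
  have hSa : DifferentiableAt ℝ St R := (hsS R hR).differentiableAt two_ne_zero
  have haa : DifferentiableAt ℝ a R := (hsa R hR).differentiableAt two_ne_zero
  have hwa : DifferentiableAt ℝ w R := (hsw R hR).differentiableAt two_ne_zero
  -- values of rescaled functions
  have hSNval : SN (lamN * R) = lamN * St R := by
    show lamN * St (lamN * R / lamN) = _
    rw [hrR]
  have hωval : ∀ j : ℕ, (j : ℝ) ≤ (N : ℝ) →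
      (ωN j (lamN * R)) ^ 2 = (j : ℝ) * ((N : ℝ) - (j : ℝ)) * (w R) ^ 2 := by
    intro j hj
    show (Real.sqrt ((j : ℝ) * ((N : ℝ) - (j : ℝ))) * w (lamN * R / lamN)) ^ 2 = _
    rw [hrR, mul_pow, Real.sq_sqrt (mul_nonneg (Nat.cast_nonneg j) (by linarith))]
  have hωv : ∀ j : ℕ, ωN j (lamN * R) = Real.sqrt ((j : ℝ) * ((N : ℝ) - (j : ℝ))) * w R := by
    intro j
    show Real.sqrt ((j : ℝ) * ((N : ℝ) - (j : ℝ))) * w (lamN * R / lamN) = _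
    rw [hrR]
  have hαval : ∀ j : ℕ, 1 ≤ j → j ≤ N →
      αN j (lamN * R) = ((N : ℝ) + 1 - 2 * (j : ℝ)) * a R := by
    intro j h1 h2
    rw [hαf j (by omega)]
    show ((N : ℝ) + 1 - 2 * (j : ℝ)) * a (lamN * R / lamN) = _
    rw [hrR]
  -- the mu identity
  have hmufun : EYM.mu k (lamN * ℓt) mN = fun x => EYM.mu k ℓt mt (x / lamN) := by
    funext x
    show k - 2 * (lamN * mt (x / lamN)) / x + x ^ 2 / (lamN * ℓt) ^ 2
        = k - 2 * mt (x / lamN) / (x / lamN) + (x / lamN) ^ 2 / ℓt ^ 2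
    rw [div_div_eq_mul_div]
    simp only [div_pow, div_div, mul_pow]
    ring
  have hμval : EYM.mu k (lamN * ℓt) mN (lamN * R) = EYM.mu k ℓt mt R := by
    rw [hmufun]
    show EYM.mu k ℓt mt (lamN * R / lamN) = _
    rw [hrR]
  have hμdiff : DifferentiableAt ℝ (EYM.mu k ℓt mt) R := by
    have heq : EYM.mu k ℓt mt = fun x => k - 2 * mt x / x + x ^ 2 / ℓt ^ 2 := rfl
    rw [heq]
    exact ((differentiableAt_const k).sub
      ((hma.const_mul 2).div differentiableAt_id hRne)).add
      ((differentiableAt_id.pow 2).div_const _)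
  have hμder : deriv (EYM.mu k (lamN * ℓt) mN) (lamN * R)
      = deriv (EYM.mu k ℓt mt) R / lamN := by
    rw [hmufun]
    rw [su2aux_deriv_scale0 (EYM.mu k ℓt mt) lamN (lamN * R) (by rw [hrR]; exact hμdiff), hrR]
  -- derivatives of rescaled functions
  have hdm : deriv mN (lamN * R) = deriv mt R := by
    have h := su2aux_deriv_scale mt lamN lamN (lamN * R) (by rw [hrR]; exact hma)
    rw [hrR] at h
    rw [show mN = fun y => lamN * mt (y / lamN) from rfl, h, div_self hlamne, one_mul]
  have hdS : deriv SN (lamN * R) = deriv St R := by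
    have h := su2aux_deriv_scale St lamN lamN (lamN * R) (by rw [hrR]; exact hSa)
    rw [hrR] at h
    rw [show SN = fun y => lamN * St (y / lamN) from rfl, h, div_self hlamne, one_mul]
  have hdw : ∀ j : ℕ, deriv (ωN j) (lamN * R)
      = Real.sqrt ((j : ℝ) * ((N : ℝ) - (j : ℝ))) / lamN * deriv w R := by
    intro j
    have h := su2aux_deriv_scale w (Real.sqrt ((j : ℝ) * ((N : ℝ) - (j : ℝ)))) lamN
      (lamN * R) (by rw [hrR]; exact hwa)
    rw [hrR] at h
    rw [hωf j, h]
  have hddw : ∀ j : ℕ, deriv (deriv (ωN j)) (lamN * R)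
      = Real.sqrt ((j : ℝ) * ((N : ℝ) - (j : ℝ))) / lamN ^ 2 * deriv (deriv w) R := by
    intro j
    have h := su2aux_deriv2_scale w (Real.sqrt ((j : ℝ) * ((N : ℝ) - (j : ℝ)))) lamN
      (lamN * R) (by rw [hrR]; exact hsw R hR)
    rw [hrR] at h
    rw [hωf j, h]
  have hdα : ∀ j : ℕ, 1 ≤ j → j ≤ N → deriv (αN j) (lamN * R)
      = ((N : ℝ) + 1 - 2 * (j : ℝ)) / lamN * deriv a R := by
    intro j h1 h2
    have h := su2aux_deriv_scale a ((N : ℝ) + 1 - 2 * (j : ℝ)) lamN (lamN * R)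
      (by rw [hrR]; exact haa)
    rw [hrR] at h
    rw [hαf j (by omega), h]
  have hddα : ∀ j : ℕ, 1 ≤ j → j ≤ N → deriv (deriv (αN j)) (lamN * R)
      = ((N : ℝ) + 1 - 2 * (j : ℝ)) / lamN ^ 2 * deriv (deriv a) R := by
    intro j h1 h2
    have h := su2aux_deriv2_scale a ((N : ℝ) + 1 - 2 * (j : ℝ)) lamN (lamN * R)
      (by rw [hrR]; exact hsa R hR)
    rw [hrR] at h
    rw [hαf j (by omega), h]
  -- the sums
  have heta : EYM.eta N αN (lamN * R) = 2 * (deriv a R) ^ 2 := by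
    unfold EYM.eta
    have h1 : ∀ j ∈ Finset.Icc 1 N, (deriv (αN j) (lamN * R)) ^ 2
        = ((N : ℝ) + 1 - 2 * (j : ℝ)) ^ 2 * (deriv a R / lamN) ^ 2 := by
      intro j hj
      simp only [Finset.mem_Icc] at hj
      rw [hdα j hj.1 hj.2]; ring
    rw [Finset.sum_congr rfl h1, ← Finset.sum_mul, su2aux_sum_coeff_sq, h6]
    field_simp
    ring
  have hG : EYM.Gf N ωN (lamN * R) = (deriv w R) ^ 2 := by
    unfold EYM.Gf
    have h1 : ∀ j ∈ Finset.Icc 1 (N - 1), (deriv (ωN j) (lamN * R)) ^ 2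
        = (j : ℝ) * ((N : ℝ) - (j : ℝ)) * (deriv w R / lamN) ^ 2 := by
      intro j hj
      simp only [Finset.mem_Icc] at hj
      have hjN : (j : ℝ) ≤ (N : ℝ) := by exact_mod_cast (by omega : j ≤ N)
      have hc : (0 : ℝ) ≤ (j : ℝ) * ((N : ℝ) - (j : ℝ)) :=
        mul_nonneg (Nat.cast_nonneg j) (by linarith)
      rw [hdw j, div_mul_eq_mul_div, div_pow, mul_pow, Real.sq_sqrt hc]
      ring
    rw [Finset.sum_congr rfl h1, ← Finset.sum_mul, su2aux_sum_jNj N (by omega), h6]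
    field_simp
  have hzeta : EYM.zeta N ωN αN (lamN * R) = 4 * lamN ^ 2 * (w R) ^ 2 * (a R) ^ 2 := by
    unfold EYM.zeta
    have h1 : ∀ j ∈ Finset.Icc 1 (N - 1),
        (ωN j (lamN * R)) ^ 2 * (αN j (lamN * R) - αN (j + 1) (lamN * R)) ^ 2
        = (j : ℝ) * ((N : ℝ) - (j : ℝ)) * (4 * (w R) ^ 2 * (a R) ^ 2) := by
      intro j hj
      simp only [Finset.mem_Icc] at hj
      have hjN : (j : ℝ) ≤ (N : ℝ) := by exact_mod_cast (by omega : j ≤ N)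
      rw [hωval j hjN, hαval j hj.1 (by omega), hαval (j + 1) (by omega) (by omega)]
      push_cast
      ring
    rw [Finset.sum_congr rfl h1, ← Finset.sum_mul, su2aux_sum_jNj N (by omega), hlam2.symm]
    ring
  have hP : EYM.Pf N k ωN (lamN * R) = ((w R) ^ 2 - k) ^ 2 / (2 * R ^ 2) := by
    unfold EYM.Pf
    have h1 : ∀ j ∈ Finset.Icc 1 N,
        ((ωN j (lamN * R)) ^ 2 - (ωN (j - 1) (lamN * R)) ^ 2
          - k * ((N : ℝ) + 1 - 2 * (j : ℝ))) ^ 2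
        = ((N : ℝ) + 1 - 2 * (j : ℝ)) ^ 2 * ((w R) ^ 2 - k) ^ 2 := by
      intro j hj
      simp only [Finset.mem_Icc] at hj
      have hc1 : ((j - 1 : ℕ) : ℝ) = (j : ℝ) - 1 := by
        rw [Nat.cast_sub hj.1, Nat.cast_one]
      have hjN : (j : ℝ) ≤ (N : ℝ) := by exact_mod_cast hj.2
      have hj1N : ((j - 1 : ℕ) : ℝ) ≤ (N : ℝ) := by rw [hc1]; linarith
      rw [hωval j hjN, hωval (j - 1) hj1N, hc1]
      ring
    rw [Finset.sum_congr rfl h1, ← Finset.sum_mul, su2aux_sum_coeff_sq, h6]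
    rw [show (lamN * R) ^ 2 = lamN ^ 2 * R ^ 2 from by ring]
    field_simp
    ring
  refine ⟨?_, ?_, ?_, ?_⟩
  · -- EE1
    show deriv mN (lamN * R) = _
    rw [hdm, heta, hzeta, hG, hP, hμval, hSNval, hEE1 R hR]
    field_simp
    ring
  · -- EE2
    show deriv SN (lamN * R) / SN (lamN * R) = _
    rw [hdS, hSNval, hzeta, hG, hμval, mul_comm lamN (St R), ← div_div, hEE2 R hR]
    field_simp
    ring
  · -- YM1
    intro j hj1 hjN
    have hjNR : (j : ℝ) ≤ (N : ℝ) := by exact_mod_cast hjN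
    have hA : (ωN j (lamN * R)) ^ 2 * (αN j (lamN * R) - αN (j + 1) (lamN * R))
        = (j : ℝ) * ((N : ℝ) - (j : ℝ)) * (w R) ^ 2 * (2 * a R) := by
      by_cases hjn : j = N
      · have hjr : (j : ℝ) = (N : ℝ) := by exact_mod_cast hjn
        rw [hωval j hjNR, hjr]
        ring
      · rw [hωval j hjNR, hαval j hj1 hjN, hαval (j + 1) (by omega) (by omega)]
        push_cast
        ring
    have hB : (ωN (j - 1) (lamN * R)) ^ 2 * (αN (j - 1) (lamN * R) - αN j (lamN * R))
        = ((j : ℝ) - 1) * ((N : ℝ) - ((j : ℝ) - 1)) * (w R) ^ 2 * (2 * a R) := by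
      by_cases hj1' : j = 1
      · subst hj1'
        show (ωN 0 (lamN * R)) ^ 2 * _ = _
        rw [hωval 0 (by simpa using Nat.cast_nonneg (α := ℝ) N)]
        push_cast
        ring
      · have hc1 : ((j - 1 : ℕ) : ℝ) = (j : ℝ) - 1 := by
          rw [Nat.cast_sub hj1, Nat.cast_one]
        rw [hωval (j - 1) (by rw [hc1]; linarith), hαval (j - 1) (by omega) (by omega),
          hαval j hj1 hjN, hc1]
        ring
    rw [hddα j hj1 hjN, hdα j hj1 hjN, hdS, hSNval, hμval, hA, hB, hYM1 R hR]
    field_simp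
    ring
  · -- YM2
    intro j hj1 hjN1
    have hjN : j + 1 ≤ N := by omega
    have hjNR : (j : ℝ) ≤ (N : ℝ) := by exact_mod_cast (by omega : j ≤ N)
    have hc1 : ((j - 1 : ℕ) : ℝ) = (j : ℝ) - 1 := by
      rw [Nat.cast_sub hj1, Nat.cast_one]
    have hW : EYM.Wf k ωN j (lamN * R) = k - (w R) ^ 2 := by
      unfold EYM.Wf
      rw [hωval j hjNR, hωval (j + 1) (by exact_mod_cast hjN),
        hωval (j - 1) (by rw [hc1]; linarith), hc1]
      push_cast
      have hj1R : (1 : ℝ) ≤ (j : ℝ) := by exact_mod_cast hj1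
      nlinarith [sq_nonneg (w R)]
    rw [hddw j, hdw j, hdS, hSNval, hμval, hμder, hW, hωv j,
      hαval j hj1 (by omega), hαval (j + 1) (by omega) hjN, hYM2 R hR]
    push_cast
    field_simp
    ring
end
end

section
/- (Lemma on quartic Hahn sums) Fix an integer N ≥ 2 and let Q_1, …, Q_{N−1} be a family as in the context. Then c_{ijpq} = 0 for all indices i, j, p, q ∈ {1, …, N−1} with i + j + p ≤ q. -/
open scoped BigOperators

/-- `f` agrees on `S` with a polynomial of degree `< k`. -/
private def DegLE (S : Finset ℕ) (f : ℕ → ℝ) (k : ℕ) : Prop :=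
  ∃ c : ℕ → ℝ, ∀ r ∈ S, f r = ∑ t ∈ Finset.range k, c t * (r : ℝ) ^ t

private lemma degLE_congr {S : Finset ℕ} {f g : ℕ → ℝ} {k : ℕ}
    (h : ∀ r ∈ S, f r = g r) (hg : DegLE S g k) : DegLE S f k := by
  obtain ⟨c, hc⟩ := hg
  exact ⟨c, fun r hr => (h r hr).trans (hc r hr)⟩

private lemma degLE_zero {S : Finset ℕ} {k : ℕ} : DegLE S (fun _ => (0:ℝ)) k :=
  ⟨fun _ => 0, fun r _ => by simp⟩

private lemma degLE_mono {S : Finset ℕ} {f : ℕ → ℝ} {k l : ℕ}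
    (h : DegLE S f k) (hkl : k ≤ l) : DegLE S f l := by
  obtain ⟨c, hc⟩ := h
  refine ⟨fun t => if t < k then c t else 0, fun r hr => ?_⟩
  have h2 : ∑ t ∈ Finset.range l, (if t < k then c t else 0) * (r:ℝ)^t
      = ∑ t ∈ Finset.range k, (if t < k then c t else 0) * (r:ℝ)^t := by
    refine (Finset.sum_subset (Finset.range_subset_range.mpr hkl) ?_).symm
    intro t _ htk
    simp only [Finset.mem_range, not_lt] at htk
    rw [if_neg (by omega), zero_mul]
  rw [hc r hr, h2]
  refine Finset.sum_congr rfl fun t ht => ?_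
  rw [if_pos (Finset.mem_range.mp ht)]

private lemma degLE_add {S : Finset ℕ} {f g : ℕ → ℝ} {k : ℕ}
    (hf : DegLE S f k) (hg : DegLE S g k) : DegLE S (fun r => f r + g r) k := by
  obtain ⟨c, hc⟩ := hf
  obtain ⟨d, hd⟩ := hg
  refine ⟨fun t => c t + d t, fun r hr => ?_⟩
  simp only [hc r hr, hd r hr, add_mul, Finset.sum_add_distrib]

private lemma degLE_smul {S : Finset ℕ} {f : ℕ → ℝ} {k : ℕ} (a : ℝ)
    (hf : DegLE S f k) : DegLE S (fun r => a * f r) k := by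
  obtain ⟨c, hc⟩ := hf
  refine ⟨fun t => a * c t, fun r hr => ?_⟩
  simp only [hc r hr, Finset.mul_sum]
  exact Finset.sum_congr rfl fun t _ => by ring

private lemma degLE_X_mul {S : Finset ℕ} {f : ℕ → ℝ} {k : ℕ}
    (hf : DegLE S f k) : DegLE S (fun r => (r:ℝ) * f r) (k + 1) := by
  obtain ⟨c, hc⟩ := hf
  refine ⟨fun t => if t = 0 then 0 else c (t - 1), fun r hr => ?_⟩
  calc (r:ℝ) * f r = ∑ t ∈ Finset.range k, c t * (r:ℝ)^(t+1) := by
        rw [hc r hr, Finset.mul_sum]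
        exact Finset.sum_congr rfl fun t _ => by ring
    _ = ∑ t ∈ Finset.range (k+1), (if t = 0 then 0 else c (t - 1)) * (r:ℝ)^t := by
        rw [Finset.sum_range_succ']
        simp

private lemma degLE_sum {S : Finset ℕ} {k : ℕ} {ι : Type*} (T : Finset ι) (F : ι → ℕ → ℝ)
    (h : ∀ x ∈ T, DegLE S (F x) k) :
    DegLE S (fun r => ∑ x ∈ T, F x r) k := by
  classical
  revert h
  refine Finset.induction_on T ?_ ?_
  · intro _
    exact degLE_congr (fun r _ => by simp) degLE_zero
  · intro a s ha ih h
    exact degLE_congr (fun r _ => by rw [Finset.sum_insert ha])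
      (degLE_add (h a (Finset.mem_insert_self a s))
        (ih fun x hx => h x (Finset.mem_insert_of_mem hx)))

private lemma degLE_pow_mul {S : Finset ℕ} {g : ℕ → ℝ} {m : ℕ} (t : ℕ)
    (hg : DegLE S g m) : DegLE S (fun r => (r:ℝ)^t * g r) (m + t) := by
  induction t with
  | zero => exact degLE_congr (fun r _ => by simp) hg
  | succ t ih =>
      exact degLE_congr (fun r _ => by ring) (degLE_X_mul ih)

private lemma degLE_mul {S : Finset ℕ} {f g : ℕ → ℝ} {k m : ℕ}
    (hf : DegLE S f (k + 1)) (hg : DegLE S g (m + 1)) :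
    DegLE S (fun r => f r * g r) (k + m + 1) := by
  obtain ⟨c, hc⟩ := hf
  refine degLE_congr (g := fun r => ∑ t ∈ Finset.range (k+1), c t * ((r:ℝ)^t * g r))
    (fun r hr => ?_) ?_
  · rw [hc r hr, Finset.sum_mul]
    exact Finset.sum_congr rfl fun t _ => by ring
  · refine degLE_sum _ _ fun t ht => ?_
    refine degLE_mono (degLE_smul (c t) (degLE_pow_mul t hg)) ?_
    have := Finset.mem_range.mp ht
    omega

/-- Lemma on quartic Hahn sums: for a Hahn-type family `Q_1, …, Q_{N-1}`, the quartic
sums `c_{ijpq} = Σ_{r=1}^{N-1} (r/(N-r)³) Q_i(r-1) Q_j(r-1) Q_p(r-1) Q_q(r-1)` vanish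
whenever `i + j + p ≤ q`. -/
theorem hahn_quartic_vanish
    (N : ℕ) (hN : 2 ≤ N) (Q : ℕ → ℕ → ℝ)
    (hQ0 : ∀ x, Q 0 x = 0)
    (hQ1 : ∀ r, 1 ≤ r → r ≤ N - 1 → Q 1 (r - 1) = ((N : ℝ) - (r : ℝ)) / ((N : ℝ) - 1))
    (horth : ∀ p q, 1 ≤ p → p ≤ N - 1 → 1 ≤ q → q ≤ N - 1 → p ≠ q →
      ∑ r ∈ Finset.Icc 1 (N - 1),
        (r : ℝ) / ((N : ℝ) - (r : ℝ)) * Q p (r - 1) * Q q (r - 1) = 0)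
    (hrec : ∀ i, 1 ≤ i → i ≤ N - 2 → ∃ b e d : ℝ, b ≠ 0 ∧
      ∀ x, x ≤ N - 2 →
        (x : ℝ) * Q i x = b * Q (i + 1) x + e * Q i x + d * Q (i - 1) x)
    (hrecN : ∃ e d : ℝ, ∀ x, x ≤ N - 2 →
      (x : ℝ) * Q (N - 1) x = e * Q (N - 1) x + d * Q (N - 2) x) :
    ∀ i j p q, 1 ≤ i → i ≤ N - 1 → 1 ≤ j → j ≤ N - 1 → 1 ≤ p → p ≤ N - 1 →
      1 ≤ q → q ≤ N - 1 → i + j + p ≤ q →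
      ∑ r ∈ Finset.Icc 1 (N - 1),
          (r : ℝ) / ((N : ℝ) - (r : ℝ)) ^ 3
            * Q i (r - 1) * Q j (r - 1) * Q p (r - 1) * Q q (r - 1) = 0 := by
  intro i j p q hi hiN hj hjN hp hpN hq hqN hle
  -- Skolemize the recurrence coefficients
  have hex : ∀ k : ℕ, ∃ b e d : ℝ, 1 ≤ k → k ≤ N - 2 → (b ≠ 0 ∧
      ∀ x, x ≤ N - 2 → (x:ℝ) * Q k x = b * Q (k+1) x + e * Q k x + d * Q (k-1) x) := by
    intro k
    by_cases h1 : 1 ≤ k ∧ k ≤ N - 2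
    · obtain ⟨b, e, d, hb, hx⟩ := hrec k h1.1 h1.2
      exact ⟨b, e, d, fun _ _ => ⟨hb, hx⟩⟩
    · exact ⟨1, 0, 0, fun hk1 hk2 => absurd ⟨hk1, hk2⟩ h1⟩
  choose B E D hBED using hex
  set R : ℕ → ℕ → ℝ := fun k r => Q k (r - 1) / ((N:ℝ) - (r:ℝ)) with hRdef
  have hN2 : (2:ℝ) ≤ (N:ℝ) := by exact_mod_cast hN
  have hN1 : ((N:ℝ) - 1) ≠ 0 := by linarith
  have hNr : ∀ r ∈ Finset.Icc 1 (N-1), ((N:ℝ) - (r:ℝ)) ≠ 0 := by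
    intro r hr
    rw [Finset.mem_Icc] at hr
    have h2 : (r:ℝ) ≤ ((N-1 : ℕ):ℝ) := Nat.cast_le.mpr hr.2
    rw [Nat.cast_sub (by omega), Nat.cast_one] at h2
    linarith
  have hR0 : ∀ r : ℕ, R 0 r = 0 := by
    intro r; simp [hRdef, hQ0]
  have hR1S : ∀ r ∈ Finset.Icc 1 (N-1), R 1 r = 1 / ((N:ℝ) - 1) := by
    intro r hr
    have hd := hNr r hr
    rw [Finset.mem_Icc] at hr
    simp only [hRdef]
    rw [hQ1 r hr.1 hr.2]
    field_simp
  have hRrecS : ∀ k, 1 ≤ k → k ≤ N - 2 → ∀ r ∈ Finset.Icc 1 (N-1),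
      (r:ℝ) * R k r = B k * R (k+1) r + (E k + 1) * R k r + D k * R (k-1) r := by
    intro k hk1 hk2 r hr
    obtain ⟨hb, hx⟩ := hBED k hk1 hk2
    have hd := hNr r hr
    rw [Finset.mem_Icc] at hr
    have hx' := hx (r-1) (by omega)
    have hc : ((r-1:ℕ):ℝ) = (r:ℝ) - 1 := by
      rw [Nat.cast_sub hr.1, Nat.cast_one]
    rw [hc] at hx'
    simp only [hRdef]
    field_simp
    linarith [hx']
  have horthR : ∀ k, 1 ≤ k → k ≤ N - 1 → k ≠ q →
      ∑ r ∈ Finset.Icc 1 (N-1), ((r:ℝ) * ((N:ℝ) - (r:ℝ))) * R k r * R q r = 0 := by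
    intro k hk1 hk2 hkq
    have h := horth k q hk1 hk2 hq hqN hkq
    rw [← h]
    refine Finset.sum_congr rfl fun r hr => ?_
    have hd := hNr r hr
    simp only [hRdef]
    field_simp
  have hT : ∀ t : ℕ, ∀ k : ℕ, t + k < q →
      ∑ r ∈ Finset.Icc 1 (N-1), ((r:ℝ) * ((N:ℝ) - (r:ℝ))) * (r:ℝ)^t * R k r * R q r = 0 := by
    intro t
    induction t with
    | zero =>
        intro k hk
        rcases Nat.eq_zero_or_pos k with rfl | hk1
        · refine Finset.sum_eq_zero fun r _ => ?_
          rw [hR0 r]; ring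
        · have h := horthR k hk1 (by omega) (by omega)
          rw [← h]
          refine Finset.sum_congr rfl fun r _ => ?_
          rw [pow_zero, mul_one]
    | succ t ih =>
        intro k hklt
        rcases Nat.eq_zero_or_pos k with rfl | hk1
        · refine Finset.sum_eq_zero fun r _ => ?_
          rw [hR0 r]; ring
        · have hk2 : k ≤ N - 2 := by omega
          have key : ∀ r ∈ Finset.Icc 1 (N-1),
              ((r:ℝ) * ((N:ℝ) - (r:ℝ))) * (r:ℝ)^(t+1) * R k r * R q r
              = B k * (((r:ℝ) * ((N:ℝ) - (r:ℝ))) * (r:ℝ)^t * R (k+1) r * R q r)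
              + (E k + 1) * (((r:ℝ) * ((N:ℝ) - (r:ℝ))) * (r:ℝ)^t * R k r * R q r)
              + D k * (((r:ℝ) * ((N:ℝ) - (r:ℝ))) * (r:ℝ)^t * R (k-1) r * R q r) := by
            intro r hr
            have hrec2 := hRrecS k hk1 hk2 r hr
            calc ((r:ℝ) * ((N:ℝ) - (r:ℝ))) * (r:ℝ)^(t+1) * R k r * R q r
                = (((r:ℝ) * ((N:ℝ) - (r:ℝ))) * (r:ℝ)^t * R q r) * ((r:ℝ) * R k r) := by
                  ring
              _ = (((r:ℝ) * ((N:ℝ) - (r:ℝ))) * (r:ℝ)^t * R q r)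
                  * (B k * R (k+1) r + (E k + 1) * R k r + D k * R (k-1) r) := by
                  rw [hrec2]
              _ = _ := by ring
          rw [Finset.sum_congr rfl key, Finset.sum_add_distrib, Finset.sum_add_distrib,
            ← Finset.mul_sum, ← Finset.mul_sum, ← Finset.mul_sum,
            ih (k+1) (by omega), ih k (by omega), ih (k-1) (by omega)]
          ring
  have hMono : ∀ t : ℕ, t + 1 < q →
      ∑ r ∈ Finset.Icc 1 (N-1), ((r:ℝ) * ((N:ℝ) - (r:ℝ))) * (r:ℝ)^t * R q r = 0 := by
    intro t ht
    have h1 := hT t 1 (by omega)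
    calc ∑ r ∈ Finset.Icc 1 (N-1), ((r:ℝ) * ((N:ℝ) - (r:ℝ))) * (r:ℝ)^t * R q r
        = ∑ r ∈ Finset.Icc 1 (N-1),
            ((N:ℝ) - 1) * (((r:ℝ) * ((N:ℝ) - (r:ℝ))) * (r:ℝ)^t * R 1 r * R q r) := by
          refine Finset.sum_congr rfl fun r hr => ?_
          rw [hR1S r hr]
          field_simp
      _ = ((N:ℝ) - 1) * ∑ r ∈ Finset.Icc 1 (N-1),
            ((r:ℝ) * ((N:ℝ) - (r:ℝ))) * (r:ℝ)^t * R 1 r * R q r := by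
          rw [Finset.mul_sum]
      _ = 0 := by rw [h1, mul_zero]
  have hDegR : ∀ k, k ≤ N - 1 → DegLE (Finset.Icc 1 (N-1)) (R k) k := by
    intro k
    induction k using Nat.strong_induction_on with
    | _ k ihk =>
      intro hkN
      match k, ihk, hkN with
      | 0, _, _ => exact degLE_congr (fun r _ => hR0 r) degLE_zero
      | 1, _, _ =>
          refine ⟨fun _ => 1 / ((N:ℝ) - 1), fun r hr => ?_⟩
          rw [hR1S r hr]; simp
      | (m+2), ihk, hkN =>
          have h1 : m + 1 ≤ N - 2 := by omega
          have hm1 : DegLE (Finset.Icc 1 (N-1)) (R (m+1)) (m+1) :=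
            ihk (m+1) (by omega) (by omega)
          have hm0 : DegLE (Finset.Icc 1 (N-1)) (R m) m := ihk m (by omega) (by omega)
          obtain ⟨hb, -⟩ := hBED (m+1) (by omega) h1
          have hrec2 := hRrecS (m+1) (by omega) h1
          have hg : DegLE (Finset.Icc 1 (N-1))
              (fun r => (1 / B (m+1)) * ((r:ℝ) * R (m+1) r)
                + ((-(E (m+1) + 1) / B (m+1)) * R (m+1) r
                  + (-(D (m+1)) / B (m+1)) * R m r)) (m+2) := by
            refine degLE_add (degLE_smul _ (degLE_X_mul hm1)) ?_
            refine degLE_mono (degLE_add (degLE_smul _ hm1)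
              (degLE_smul _ (degLE_mono hm0 (by omega)))) (by omega)
          refine degLE_congr (fun r hr => ?_) hg
          have hd := hNr r hr
          rw [Finset.mem_Icc] at hr
          obtain ⟨-, hx⟩ := hBED (m+1) (by omega) h1
          have hx' := hx (r-1) (by omega)
          have hcast : ((r-1:ℕ):ℝ) = (r:ℝ) - 1 := by
            rw [Nat.cast_sub hr.1, Nat.cast_one]
          rw [hcast] at hx'
          simp only [Nat.add_sub_cancel] at hx'
          simp only [hRdef]
          field_simp
          linear_combination (-1:ℝ) * hx'
  obtain ⟨i', rfl⟩ : ∃ i', i = i' + 1 := ⟨i - 1, by omega⟩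
  obtain ⟨j', rfl⟩ : ∃ j', j = j' + 1 := ⟨j - 1, by omega⟩
  obtain ⟨p', rfl⟩ : ∃ p', p = p' + 1 := ⟨p - 1, by omega⟩
  have hdeg : DegLE (Finset.Icc 1 (N-1))
      (fun r => R (i'+1) r * R (j'+1) r * R (p'+1) r) (i' + j' + p' + 1) := by
    have h1 := degLE_mul (k := i') (m := j') (hDegR (i'+1) (by omega)) (hDegR (j'+1) (by omega))
    exact degLE_mul (k := i' + j') (m := p') h1 (hDegR (p'+1) (by omega))
  obtain ⟨c, hc⟩ := hdeg
  calc ∑ r ∈ Finset.Icc 1 (N - 1), (r : ℝ) / ((N : ℝ) - (r : ℝ)) ^ 3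
          * Q (i'+1) (r - 1) * Q (j'+1) (r - 1) * Q (p'+1) (r - 1) * Q q (r - 1)
      = ∑ r ∈ Finset.Icc 1 (N-1), ∑ t ∈ Finset.range (i' + j' + p' + 1),
          c t * (((r:ℝ) * ((N:ℝ) - (r:ℝ))) * (r:ℝ)^t * R q r) := by
        refine Finset.sum_congr rfl fun r hr => ?_
        have hd := hNr r hr
        have hcr : R (i'+1) r * R (j'+1) r * R (p'+1) r
            = ∑ t ∈ Finset.range (i' + j' + p' + 1), c t * (r:ℝ)^t := hc r hr
        calc (r : ℝ) / ((N : ℝ) - (r : ℝ)) ^ 3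
              * Q (i'+1) (r - 1) * Q (j'+1) (r - 1) * Q (p'+1) (r - 1) * Q q (r - 1)
            = ((r:ℝ) * ((N:ℝ) - (r:ℝ))) * (R (i'+1) r * R (j'+1) r * R (p'+1) r) * R q r := by
              simp only [hRdef]
              field_simp
          _ = ((r:ℝ) * ((N:ℝ) - (r:ℝ)))
              * (∑ t ∈ Finset.range (i' + j' + p' + 1), c t * (r:ℝ)^t) * R q r := by
              rw [hcr]
          _ = ∑ t ∈ Finset.range (i' + j' + p' + 1),
              c t * (((r:ℝ) * ((N:ℝ) - (r:ℝ))) * (r:ℝ)^t * R q r) := by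
              rw [Finset.mul_sum, Finset.sum_mul]
              exact Finset.sum_congr rfl fun t _ => by ring
    _ = ∑ t ∈ Finset.range (i' + j' + p' + 1), ∑ r ∈ Finset.Icc 1 (N-1),
          c t * (((r:ℝ) * ((N:ℝ) - (r:ℝ))) * (r:ℝ)^t * R q r) := Finset.sum_comm
    _ = 0 := by
        refine Finset.sum_eq_zero fun t ht => ?_
        have ht' := Finset.mem_range.mp ht
        rw [← Finset.mul_sum, hMono t (by omega), mul_zero]
end

section
/- (Corollary: vanishing of cubic eigenvector coefficients) Fix an integer N ≥ 2 and let Q_1, …, Q_{N−1} be a family as in the context. Define v^j_a = ((N−1)/(N−j)) Q_a(j−1) and σ^a_j = (j(N−j)/(N−1)) v^j_a for j, a ∈ {1, …, N−1}, set d_a = Σ_{j=1}^{N−1} σ^a_j v^j_a and assume d_a ≠ 0 for all a, and define d^a_{rst} = d_a^{−1} Σ_{i=1}^{N−1} σ^a_i v^i_r v^i_s v^i_t. Then d^a_{rst} = 0 whenever r + s + t ≤ a (indices in {1, …, N−1}); indeed d^a_{rst} = d_a^{−1}(N−1)³ c_{arst}. -/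
open scoped BigOperators

open Polynomial in
/-- Polynomial representatives of the Hahn-type family, built from the
three-term recurrence coefficients. -/
noncomputable def hahnP (N : ℕ) (b e d : ℕ → ℝ) : ℕ → Polynomial ℝ
  | 0 => 0
  | 1 => C (((N : ℝ) - 1)⁻¹) * (C ((N : ℝ) - 1) - X)
  | (j + 2) =>
      ((X - C (e (j + 1))) * hahnP N b e d (j + 1)
        - C (d (j + 1)) * hahnP N b e d j) * C ((b (j + 1))⁻¹)

/-- Corollary: vanishing of cubic eigenvector coefficients.  With `v^j_a` and `σ^a_j`
built from a Hahn-type family `Q_1, …, Q_{N-1}`, the coefficients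
`d^a_{rst} = d_a⁻¹ Σ_i σ^a_i v^i_r v^i_s v^i_t` satisfy
`d^a_{rst} = d_a⁻¹ (N-1)³ c_{arst}` and vanish whenever `r + s + t ≤ a`. -/
theorem cubic_eigenvector_coeff_vanish
    (N : ℕ) (hN : 2 ≤ N) (Q : ℕ → ℕ → ℝ)
    (hQ0 : ∀ x, Q 0 x = 0)
    (hQ1 : ∀ r, 1 ≤ r → r ≤ N - 1 → Q 1 (r - 1) = ((N : ℝ) - (r : ℝ)) / ((N : ℝ) - 1))
    (horth : ∀ p q, 1 ≤ p → p ≤ N - 1 → 1 ≤ q → q ≤ N - 1 → p ≠ q →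
      ∑ r ∈ Finset.Icc 1 (N - 1),
        (r : ℝ) / ((N : ℝ) - (r : ℝ)) * Q p (r - 1) * Q q (r - 1) = 0)
    (hrec : ∀ i, 1 ≤ i → i ≤ N - 2 → ∃ b e d : ℝ, b ≠ 0 ∧
      ∀ x, x ≤ N - 2 →
        (x : ℝ) * Q i x = b * Q (i + 1) x + e * Q i x + d * Q (i - 1) x)
    (hrecN : ∃ e d : ℝ, ∀ x, x ≤ N - 2 →
      (x : ℝ) * Q (N - 1) x = e * Q (N - 1) x + d * Q (N - 2) x) :
    let c : ℕ → ℕ → ℕ → ℕ → ℝ := fun i j p q =>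
      ∑ r ∈ Finset.Icc 1 (N - 1),
        (r : ℝ) / ((N : ℝ) - (r : ℝ)) ^ 3
          * Q i (r - 1) * Q j (r - 1) * Q p (r - 1) * Q q (r - 1)
    let v : ℕ → ℕ → ℝ := fun j a => ((N : ℝ) - 1) / ((N : ℝ) - (j : ℝ)) * Q a (j - 1)
    let σ : ℕ → ℕ → ℝ := fun a j => (j : ℝ) * ((N : ℝ) - (j : ℝ)) / ((N : ℝ) - 1) * v j a
    let d : ℕ → ℝ := fun a => ∑ j ∈ Finset.Icc 1 (N - 1), σ a j * v j a
    (∀ a, 1 ≤ a → a ≤ N - 1 → d a ≠ 0) →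
    ∀ a r s t, 1 ≤ a → a ≤ N - 1 → 1 ≤ r → r ≤ N - 1 → 1 ≤ s → s ≤ N - 1 →
      1 ≤ t → t ≤ N - 1 →
      ((d a)⁻¹ * ∑ i ∈ Finset.Icc 1 (N - 1), σ a i * v i r * v i s * v i t
          = (d a)⁻¹ * ((N : ℝ) - 1) ^ 3 * c a r s t) ∧
      (r + s + t ≤ a →
        (d a)⁻¹ * ∑ i ∈ Finset.Icc 1 (N - 1), σ a i * v i r * v i s * v i t = 0) := by
  intro c v σ d hd a r s t ha1 ha2 hr1 hr2 hs1 hs2 ht1 ht2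
  have hN1 : ((N : ℝ) - 1) ≠ 0 := by
    have : (2 : ℝ) ≤ (N : ℝ) := by exact_mod_cast hN
    intro h; linarith
  -- Part 1: the sum identity
  have hsum : ∀ a' r' s' t' : ℕ,
      (∑ i ∈ Finset.Icc 1 (N - 1), σ a' i * v i r' * v i s' * v i t')
        = ((N : ℝ) - 1) ^ 3 * c a' r' s' t' := by
    intro a' r' s' t'
    simp only [c, v, σ]
    rw [Finset.mul_sum]
    apply Finset.sum_congr rfl
    intro i hi
    obtain ⟨hi1, hi2⟩ := Finset.mem_Icc.mp hi
    have hiN : (i : ℝ) < (N : ℝ) := by exact_mod_cast (by omega : i < N)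
    have hNi : (N : ℝ) - (i : ℝ) ≠ 0 := by intro h; linarith
    field_simp
  refine ⟨by rw [hsum]; ring, ?_⟩
  intro hrst
  -- choose recurrence coefficients as total functions
  choose bb ee dd hbb hdd using hrec
  set b' : ℕ → ℝ := fun i => if h : 1 ≤ i ∧ i ≤ N - 2 then bb i h.1 h.2 else 1 with hb'def
  set e' : ℕ → ℝ := fun i => if h : 1 ≤ i ∧ i ≤ N - 2 then ee i h.1 h.2 else 0 with he'def
  set d' : ℕ → ℝ := fun i => if h : 1 ≤ i ∧ i ≤ N - 2 then dd i h.1 h.2 else 0 with hd'def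
  have hbed : ∀ i, 1 ≤ i → i ≤ N - 2 → b' i ≠ 0 ∧
      ∀ x, x ≤ N - 2 → (x : ℝ) * Q i x
        = b' i * Q (i + 1) x + e' i * Q i x + d' i * Q (i - 1) x := by
    intro i h1 h2
    simp only [hb'def, he'def, hd'def, dif_pos (And.intro h1 h2)]
    exact ⟨hbb i h1 h2, hdd i h1 h2⟩
  set P : ℕ → Polynomial ℝ := hahnP N b' e' d' with hPdef
  have hP1 : P 1 = Polynomial.C (((N : ℝ) - 1)⁻¹)
      * (Polynomial.C ((N : ℝ) - 1) - Polynomial.X) := rfl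
  have hP2 : ∀ j, P (j + 2) = ((Polynomial.X - Polynomial.C (e' (j + 1))) * P (j + 1)
      - Polynomial.C (d' (j + 1)) * P j) * Polynomial.C ((b' (j + 1))⁻¹) := fun j => rfl
  -- Main structural induction on the polynomial representatives
  have props : ∀ p, p ≤ N - 1 →
      (∀ x : ℕ, x ≤ N - 2 → (P p).eval (x : ℝ) = Q p x) ∧
      (P p).eval ((N : ℝ) - 1) = 0 ∧
      (P p).natDegree ≤ p ∧
      (1 ≤ p → (P p).coeff p ≠ 0) := by
    intro p
    induction p using Nat.strong_induction_on with
    | _ p ih =>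
      match p with
      | 0 =>
        intro _
        refine ⟨?_, ?_, ?_, ?_⟩
        · intro x _; simp [hPdef, hahnP, hQ0]
        · simp [hPdef, hahnP]
        · simp [hPdef, hahnP]
        · omega
      | 1 =>
        intro _
        have heval : ∀ y : ℝ, (P 1).eval y = ((N : ℝ) - 1)⁻¹ * (((N : ℝ) - 1) - y) := by
          intro y; rw [hP1]; simp
        refine ⟨?_, ?_, ?_, ?_⟩
        · intro x hx
          rw [heval]
          have h1 := hQ1 (x + 1) (by omega) (by omega)
          rw [show (x + 1) - 1 = x from rfl] at h1
          rw [h1]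
          push_cast
          field_simp
          ring
        · rw [heval]; ring
        · rw [hP1]
          refine le_trans (Polynomial.natDegree_mul_le) ?_
          rw [Polynomial.natDegree_C, zero_add]
          refine le_trans (Polynomial.natDegree_sub_le _ _) ?_
          rw [Polynomial.natDegree_C, Polynomial.natDegree_X]
          omega
        · intro _
          rw [hP1]
          rw [Polynomial.coeff_C_mul, Polynomial.coeff_sub, Polynomial.coeff_X_one,
            Polynomial.coeff_C]
          simp only [if_neg (by norm_num : (1 : ℕ) ≠ 0)]
          intro h
          have := inv_ne_zero hN1
          simp at h
          tauto
      | (j + 2) =>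
        intro hple
        obtain ⟨hbne, hrec'⟩ := hbed (j + 1) (by omega) (by omega)
        obtain ⟨ihA, ihR, ihD, ihC⟩ := ih (j + 1) (by omega) (by omega)
        obtain ⟨ihA0, ihR0, ihD0, _⟩ := ih j (by omega) (by omega)
        refine ⟨?_, ?_, ?_, ?_⟩
        · intro x hx
          have hx' := hrec' x hx
          rw [show (j + 1) - 1 = j from rfl] at hx'
          rw [hP2 j]
          simp only [Polynomial.eval_mul, Polynomial.eval_sub, Polynomial.eval_X,
            Polynomial.eval_C, ihA x hx, ihA0 x hx]
          field_simp
          linarith [hx']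
        · rw [hP2 j]
          simp [ihR, ihR0]
        · rw [hP2 j]
          refine le_trans (Polynomial.natDegree_mul_le) ?_
          have h1 : ((Polynomial.X - Polynomial.C (e' (j + 1))) * P (j + 1)).natDegree
              ≤ j + 2 := by
            refine le_trans (Polynomial.natDegree_mul_le) ?_
            have hX : (Polynomial.X - Polynomial.C (e' (j + 1))).natDegree ≤ 1 :=
              le_of_eq (Polynomial.natDegree_X_sub_C _)
            omega
          have h2 : (Polynomial.C (d' (j + 1)) * P j).natDegree ≤ j + 2 := by
            refine le_trans (Polynomial.natDegree_mul_le) ?_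
            simp only [Polynomial.natDegree_C]
            omega
          have h3 := Polynomial.natDegree_sub_le
            ((Polynomial.X - Polynomial.C (e' (j + 1))) * P (j + 1))
            (Polynomial.C (d' (j + 1)) * P j)
          simp only [Polynomial.natDegree_C]
          omega
        · intro _
          rw [hP2 j, Polynomial.coeff_mul_C]
          have hc1 : ((Polynomial.X - Polynomial.C (e' (j + 1))) * P (j + 1)).coeff (j + 2)
              = (P (j + 1)).coeff (j + 1) := by
            have hx : (Polynomial.X * P (j + 1)).coeff (j + 2)
                = (P (j + 1)).coeff (j + 1) := Polynomial.coeff_X_mul (P (j + 1)) (j + 1)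
            rw [sub_mul, Polynomial.coeff_sub, hx, Polynomial.coeff_C_mul,
              Polynomial.coeff_eq_zero_of_natDegree_lt
                (lt_of_le_of_lt ihD (by omega : j + 1 < j + 2))]
            ring
          have hc0 : (Polynomial.C (d' (j + 1)) * P j).coeff (j + 2) = 0 := by
            rw [Polynomial.coeff_C_mul,
              Polynomial.coeff_eq_zero_of_natDegree_lt (lt_of_le_of_lt ihD0 (by omega))]
            ring
          rw [Polynomial.coeff_sub, hc1, hc0, sub_zero]
          exact mul_ne_zero (ihC (by omega)) (inv_ne_zero hbne)
  -- Key lemma: weighted sums against Q_a of low-degree polynomials vanishing at N-1 are 0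
  have key : ∀ k, ∀ g : Polynomial ℝ, g.natDegree ≤ k → k ≤ N - 2 →
      g.eval ((N : ℝ) - 1) = 0 → ∀ a', k < a' → a' ≤ N - 1 →
      ∑ r' ∈ Finset.Icc 1 (N - 1),
        (r' : ℝ) / ((N : ℝ) - (r' : ℝ)) * Q a' (r' - 1) * g.eval ((r' : ℝ) - 1) = 0 := by
    intro k
    induction k with
    | zero =>
      intro g hdeg _ hroot a' _ _
      have hgc : g = Polynomial.C (g.coeff 0) := Polynomial.eq_C_of_natDegree_le_zero hdeg
      rw [hgc] at hroot
      simp only [Polynomial.eval_C] at hroot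
      rw [hgc, hroot]
      simp
    | succ k ih =>
      intro g hdeg hkN hroot a' ha' haN
      by_cases hle : g.natDegree ≤ k
      · exact ih g hle (by omega) hroot a' (by omega) haN
      · obtain ⟨hA, hR, hD, hC⟩ := props (k + 1) (by omega)
        have hCp := hC (by omega)
        set cc := g.coeff (k + 1) / (P (k + 1)).coeff (k + 1) with hccdef
        set g' := g - Polynomial.C cc * P (k + 1) with hg'def
        have hg'deg : g'.natDegree ≤ k := by
          rw [Polynomial.natDegree_le_iff_coeff_eq_zero]
          intro m hm
          rw [hg'def, Polynomial.coeff_sub, Polynomial.coeff_C_mul]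
          by_cases hmp : m = k + 1
          · subst hmp
            rw [hccdef, div_mul_cancel₀ _ hCp, sub_self]
          · have hmgt : k + 1 < m := by omega
            rw [Polynomial.coeff_eq_zero_of_natDegree_lt (lt_of_le_of_lt hdeg hmgt),
              Polynomial.coeff_eq_zero_of_natDegree_lt (lt_of_le_of_lt hD hmgt)]
            ring
        have hg'root : g'.eval ((N : ℝ) - 1) = 0 := by
          rw [hg'def]; simp [hroot, hR]
        have h1 := ih g' hg'deg (by omega) hg'root a' (by omega) haN
        have h2 : ∑ r' ∈ Finset.Icc 1 (N - 1),
            (r' : ℝ) / ((N : ℝ) - (r' : ℝ)) * Q a' (r' - 1)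
              * (P (k + 1)).eval ((r' : ℝ) - 1) = 0 := by
          rw [← horth a' (k + 1) (by omega) haN (by omega) (by omega) (by omega)]
          apply Finset.sum_congr rfl
          intro r' hr'
          obtain ⟨h1', h2'⟩ := Finset.mem_Icc.mp hr'
          have hcast : ((r' : ℝ) - 1) = (((r' - 1 : ℕ)) : ℝ) := by
            rw [Nat.cast_sub h1']; norm_num
          rw [hcast, hA (r' - 1) (by omega)]
        have hsplit : ∀ y : ℝ, g.eval y = g'.eval y + cc * (P (k + 1)).eval y := by
          intro y
          rw [hg'def]
          simp only [Polynomial.eval_sub, Polynomial.eval_mul, Polynomial.eval_C]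
          ring
        have hfin : (∑ r' ∈ Finset.Icc 1 (N - 1),
            (r' : ℝ) / ((N : ℝ) - (r' : ℝ)) * Q a' (r' - 1) * g.eval ((r' : ℝ) - 1))
            = (∑ r' ∈ Finset.Icc 1 (N - 1),
                (r' : ℝ) / ((N : ℝ) - (r' : ℝ)) * Q a' (r' - 1) * g'.eval ((r' : ℝ) - 1))
              + cc * (∑ r' ∈ Finset.Icc 1 (N - 1),
                (r' : ℝ) / ((N : ℝ) - (r' : ℝ)) * Q a' (r' - 1)
                  * (P (k + 1)).eval ((r' : ℝ) - 1)) := by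
          rw [Finset.mul_sum, ← Finset.sum_add_distrib]
          apply Finset.sum_congr rfl
          intro r' _
          rw [hsplit]; ring
        rw [hfin, h1, h2]; ring
  -- factor out the root at N-1
  have hfac : ∀ p, 1 ≤ p → p ≤ N - 1 → ∃ T : Polynomial ℝ,
      P p = (Polynomial.X - Polynomial.C ((N : ℝ) - 1)) * T ∧ T.natDegree ≤ p - 1 := by
    intro p h1 h2
    obtain ⟨hA, hR, hD, _⟩ := props p h2
    obtain ⟨T, hT⟩ := (Polynomial.dvd_iff_isRoot.mpr hR)
    refine ⟨T, hT, ?_⟩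
    by_cases hT0 : T = 0
    · simp [hT0]
    · have hmul := Polynomial.natDegree_mul (Polynomial.X_sub_C_ne_zero ((N : ℝ) - 1)) hT0
      rw [hT, hmul, Polynomial.natDegree_X_sub_C] at hD
      omega
  obtain ⟨Tr, hTr, hTrd⟩ := hfac r hr1 hr2
  obtain ⟨Ts, hTs, hTsd⟩ := hfac s hs1 hs2
  obtain ⟨Tt, hTt, hTtd⟩ := hfac t ht1 ht2
  set g : Polynomial ℝ := (Polynomial.X - Polynomial.C ((N : ℝ) - 1)) * (Tr * Ts * Tt)
    with hgdef
  have hgdeg : g.natDegree ≤ a - 1 := by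
    rw [hgdef]
    refine le_trans (Polynomial.natDegree_mul_le) ?_
    have hTT : (Tr * Ts * Tt).natDegree ≤ (r - 1) + (s - 1) + (t - 1) := by
      refine le_trans (Polynomial.natDegree_mul_le) ?_
      have := le_trans (Polynomial.natDegree_mul_le (p := Tr) (q := Ts))
        (add_le_add hTrd hTsd)
      omega
    have hX : (Polynomial.X - Polynomial.C ((N : ℝ) - 1)).natDegree ≤ 1 :=
      le_of_eq (Polynomial.natDegree_X_sub_C _)
    omega
  have hgroot : g.eval ((N : ℝ) - 1) = 0 := by
    rw [hgdef]; simp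
  have hkey := key (a - 1) g hgdeg (by omega) hgroot a (by omega) ha2
  have hc : c a r s t = 0 := by
    rw [← hkey]
    simp only [c]
    apply Finset.sum_congr rfl
    intro r' hr'
    obtain ⟨h1', h2'⟩ := Finset.mem_Icc.mp hr'
    have hcast : (((r' - 1 : ℕ)) : ℝ) = ((r' : ℝ) - 1) := by
      rw [Nat.cast_sub h1']; norm_num
    have hr'N : (r' : ℝ) < (N : ℝ) := by exact_mod_cast (by omega : r' < N)
    have hNr : (N : ℝ) - (r' : ℝ) ≠ 0 := by intro h; linarith
    have hq : ∀ p T, P p = (Polynomial.X - Polynomial.C ((N : ℝ) - 1)) * T → p ≤ N - 1 →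
        Q p (r' - 1) = ((r' : ℝ) - (N : ℝ)) * T.eval ((r' : ℝ) - 1) := by
      intro p T hT hp
      obtain ⟨hA, _, _, _⟩ := props p hp
      rw [← hA (r' - 1) (by omega), hcast, hT]
      simp only [Polynomial.eval_mul, Polynomial.eval_sub, Polynomial.eval_X,
        Polynomial.eval_C]
      ring
    rw [hq r Tr hTr hr2, hq s Ts hTs hs2, hq t Tt hTt ht2]
    have hg : g.eval ((r' : ℝ) - 1)
        = ((r' : ℝ) - (N : ℝ)) * (Tr.eval ((r' : ℝ) - 1) * Ts.eval ((r' : ℝ) - 1)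
            * Tt.eval ((r' : ℝ) - 1)) := by
      rw [hgdef]
      simp only [Polynomial.eval_mul, Polynomial.eval_sub, Polynomial.eval_X,
        Polynomial.eval_C]
      ring
    rw [hg]
    field_simp
    ring
  rw [hsum, hc]
  ring
end

section
/- (Proposition 6: monotonicity of the electric gauge field, decoupled form) Let 0 < r_0, let μ, S, u : [r_0, ∞) → ℝ be continuous with μ(r) > 0 and S(r) > 0 for all r ∈ [r_0, ∞), and let C̃ > 0 be a constant. Suppose E : [r_0, ∞) → ℝ is continuously differentiable, the function F(r) = (r²/S(r))E′(r) is differentiable on (r_0, ∞) with F′(r) = (C̃ u(r)²/(μ(r)S(r))) E(r) for all r > r_0, and E(r_0) = 0 with E′(r_0) ≠ 0. Then E(r)·E′(r) > 0 for every r ∈ (r_0, ∞); that is, E is strictly monotone (strictly increasing if E′(r_0) > 0, strictly decreasing if E′(r_0) < 0) and nonvanishing on (r_0, ∞). -/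
open scoped BigOperators


open Set

lemma electric_gauge_aux
    (r0 : ℝ) (hr0 : 0 < r0)
    (μ S u : ℝ → ℝ)
    (hSc : ContinuousOn S (Set.Ici r0))
    (hμ : ∀ r ∈ Set.Ici r0, 0 < μ r) (hS : ∀ r ∈ Set.Ici r0, 0 < S r)
    (Ct : ℝ) (hCt : 0 < Ct)
    (E E' : ℝ → ℝ)
    (hE : ∀ r ∈ Set.Ici r0, HasDerivWithinAt E (E' r) (Set.Ici r0) r)
    (hE'c : ContinuousOn E' (Set.Ici r0))
    (hF : ∀ r ∈ Set.Ioi r0,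
      HasDerivAt (fun s => s ^ 2 / S s * E' s) (Ct * (u r) ^ 2 / (μ r * S r) * E r) r)
    (hE0 : E r0 = 0) (hpos : 0 < E' r0) :
    (∀ r ∈ Set.Ici r0, 0 < E' r) ∧ StrictMonoOn E (Set.Ici r0) := by
  have hEc : ContinuousOn E (Set.Ici r0) := fun x hx => (hE x hx).continuousWithinAt
  -- key: E' > 0 on all of Ici r0
  have key : ∀ r ∈ Set.Ici r0, 0 < E' r := by
    by_contra hcon
    push_neg at hcon
    obtain ⟨b, hb, hble⟩ := hcon
    set T : Set ℝ := {r | r0 < r ∧ E' r ≤ 0} with hT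
    have hbT : b ∈ T := by
      refine ⟨lt_of_le_of_ne hb ?_, hble⟩
      rintro rfl; exact absurd hble (not_le.2 hpos)
    have hTne : T.Nonempty := ⟨b, hbT⟩
    have hTbdd : BddBelow T := ⟨r0, fun x hx => le_of_lt hx.1⟩
    -- near r0, E' > 0
    obtain ⟨δ, hδ, hδpos⟩ : ∃ δ > 0, ∀ r ∈ Set.Ico r0 (r0 + δ), 0 < E' r := by
      have h1 : ∀ᶠ r in nhdsWithin r0 (Set.Ici r0), 0 < E' r :=
        (hE'c r0 (self_mem_Ici)).eventually (eventually_gt_nhds hpos)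
      rw [Filter.eventually_iff, mem_nhdsGE_iff_exists_Ico_subset] at h1
      obtain ⟨c, hc, hsub⟩ := h1
      refine ⟨c - r0, by simpa using hc, fun r hr => hsub ⟨hr.1, by linarith [hr.2]⟩⟩
    have hTsub : T ⊆ Set.Ici (r0 + δ) := by
      intro r hrT
      by_contra h
      rw [Set.mem_Ici, not_le] at h
      exact absurd (hδpos r ⟨le_of_lt hrT.1, h⟩) (not_lt.2 hrT.2)
    set t := sInf T with ht
    have htlb : r0 + δ ≤ t := le_csInf hTne (fun x hx => hTsub hx)
    have htr0 : r0 < t := lt_of_lt_of_le (by linarith) htlb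
    -- E' t ≤ 0
    have hC : IsClosed (Set.Ici (r0 + δ) ∩ E' ⁻¹' Set.Iic 0) := by
      refine ContinuousOn.preimage_isClosed_of_isClosed ?_ isClosed_Ici isClosed_Iic
      exact hE'c.mono (fun x hx => le_trans (by linarith) (Set.mem_Ici.mp hx))
    have htmem : t ∈ Set.Ici (r0 + δ) ∩ E' ⁻¹' Set.Iic 0 := by
      have : t ∈ closure T := csInf_mem_closure hTne hTbdd
      exact hC.closure_subset_iff.2 (fun x hx => ⟨hTsub hx, hx.2⟩) this
    have hE't : E' t ≤ 0 := htmem.2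
    -- E' > 0 on Ico r0 t
    have hE'pos : ∀ r ∈ Set.Ico r0 t, 0 < E' r := by
      intro r hr
      rcases eq_or_lt_of_le hr.1 with rfl | hlt
      · exact hpos
      · by_contra h
        push_neg at h
        exact absurd (csInf_le hTbdd ⟨hlt, h⟩) (not_le.2 hr.2)
    -- E strictly increasing on Icc r0 t
    have hIccIci : Set.Icc r0 t ⊆ Set.Ici r0 := fun x hx => hx.1
    have hEmono : StrictMonoOn E (Set.Icc r0 t) := by
      refine strictMonoOn_of_hasDerivWithinAt_pos (f' := E') (convex_Icc r0 t) (hEc.mono hIccIci)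
        (fun x hx => ?_) (fun x hx => ?_)
      · rw [interior_Icc] at hx ⊢
        exact (hE x (le_of_lt hx.1)).mono (fun y hy => le_of_lt hy.1)
      · rw [interior_Icc] at hx
        exact hE'pos x ⟨le_of_lt hx.1, hx.2⟩
    have hEposIoc : ∀ r ∈ Set.Ioc r0 t, 0 < E r := by
      intro r hr
      have := hEmono (Set.left_mem_Icc.2 (le_of_lt htr0)) ⟨le_of_lt hr.1, hr.2⟩ hr.1
      rwa [hE0] at this
    -- F is monotone on Icc r0 t
    set F : ℝ → ℝ := fun s => s ^ 2 / S s * E' s with hFdef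
    have hFc : ContinuousOn F (Set.Ici r0) := by
      exact ((continuousOn_pow 2).div hSc (fun x hx => (hS x hx).ne')).mul hE'c
    have hFmono : MonotoneOn F (Set.Icc r0 t) := by
      refine monotoneOn_of_hasDerivWithinAt_nonneg (convex_Icc r0 t) (hFc.mono hIccIci)
        (f' := fun r => Ct * (u r) ^ 2 / (μ r * S r) * E r) (fun x hx => ?_) (fun x hx => ?_)
      · rw [interior_Icc] at hx
        exact ((hF x hx.1).hasDerivWithinAt)
      · rw [interior_Icc] at hx
        have hx' : (r0:ℝ) ≤ x := le_of_lt hx.1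
        have hμx := hμ x hx'
        have hSx := hS x hx'
        have hEx := hEposIoc x ⟨hx.1, le_of_lt hx.2⟩
        positivity
    have hFr0 : 0 < F r0 := by
      have := hS r0 self_mem_Ici
      have : 0 < r0 ^ 2 / S r0 := by positivity
      exact mul_pos this hpos
    have hFt : F t ≤ 0 := by
      have hSt := hS t (le_of_lt htr0)
      have h1 : 0 ≤ t ^ 2 / S t := by positivity
      exact mul_nonpos_of_nonneg_of_nonpos h1 hE't
    have := hFmono (Set.left_mem_Icc.2 (le_of_lt htr0)) (Set.right_mem_Icc.2 (le_of_lt htr0)) (le_of_lt htr0)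
    linarith
  refine ⟨key, ?_⟩
  refine strictMonoOn_of_hasDerivWithinAt_pos (f' := E') (convex_Ici r0) hEc (fun x hx => ?_) (fun x hx => ?_)
  · rw [interior_Ici] at hx ⊢
    exact (hE x (Set.mem_Ici.mpr (le_of_lt (Set.mem_Ioi.mp hx)))).mono Set.Ioi_subset_Ici_self
  · rw [interior_Ici] at hx
    exact key x (Set.mem_Ici.mpr (le_of_lt (Set.mem_Ioi.mp hx)))

/-- Proposition 6 (decoupled form): monotonicity of the electric gauge field.  If
`((r²/S)E′)′ = (C̃ u²/(μS)) E` on `(r₀,∞)` with `μ, S > 0`, `C̃ > 0`, `E(r₀) = 0` and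
`E′(r₀) ≠ 0`, then `E·E′ > 0` on `(r₀,∞)`: `E` is strictly monotone (increasing if
`E′(r₀) > 0`, decreasing if `E′(r₀) < 0`) and nonvanishing on `(r₀,∞)`. -/
theorem electric_gauge_monotone
    (r0 : ℝ) (hr0 : 0 < r0)
    (μ S u : ℝ → ℝ)
    (hμc : ContinuousOn μ (Set.Ici r0)) (hSc : ContinuousOn S (Set.Ici r0))
    (huc : ContinuousOn u (Set.Ici r0))
    (hμ : ∀ r ∈ Set.Ici r0, 0 < μ r) (hS : ∀ r ∈ Set.Ici r0, 0 < S r)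
    (Ct : ℝ) (hCt : 0 < Ct)
    (E E' : ℝ → ℝ)
    (hE : ∀ r ∈ Set.Ici r0, HasDerivWithinAt E (E' r) (Set.Ici r0) r)
    (hE'c : ContinuousOn E' (Set.Ici r0))
    (hF : ∀ r ∈ Set.Ioi r0,
      HasDerivAt (fun s => s ^ 2 / S s * E' s) (Ct * (u r) ^ 2 / (μ r * S r) * E r) r)
    (hE0 : E r0 = 0) (hE'0 : E' r0 ≠ 0) :
    (∀ r ∈ Set.Ioi r0, 0 < E r * E' r) ∧
      (0 < E' r0 → StrictMonoOn E (Set.Ici r0)) ∧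
      (E' r0 < 0 → StrictAntiOn E (Set.Ici r0)) ∧
      (∀ r ∈ Set.Ioi r0, E r ≠ 0) := by
  rcases hE'0.lt_or_gt with hneg | hpos
  · -- E' r0 < 0 : apply the aux lemma to -E
    obtain ⟨h1, h2⟩ := electric_gauge_aux r0 hr0 μ S u hSc hμ hS Ct hCt
      (fun r => -E r) (fun r => -E' r)
      (fun r hr => (hE r hr).neg) hE'c.neg
      (fun r hr => by simpa [mul_neg, Pi.neg_def] using (hF r hr).neg)
      (by simp [hE0]) (by simpa using hneg)
    have hEneg : ∀ r ∈ Set.Ioi r0, E r < 0 := by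
      intro r hr
      have := h2 Set.self_mem_Ici (Set.Ioi_subset_Ici_self hr) hr
      simp only [hE0, neg_zero] at this
      linarith
    refine ⟨fun r hr => ?_, fun h => absurd h (not_lt.2 hneg.le), fun _ => ?_, fun r hr => (hEneg r hr).ne⟩
    · have hE'r : E' r < 0 := by
        have := h1 r (Set.Ioi_subset_Ici_self hr); linarith
      exact mul_pos_of_neg_of_neg (hEneg r hr) hE'r
    · intro a ha b hb hab
      have := h2 ha hb hab
      simpa using this
  · -- E' r0 > 0
    obtain ⟨h1, h2⟩ := electric_gauge_aux r0 hr0 μ S u hSc hμ hS Ct hCt E E' hE hE'c hF hE0 hpos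
    have hEpos : ∀ r ∈ Set.Ioi r0, 0 < E r := by
      intro r hr
      have := h2 Set.self_mem_Ici (Set.Ioi_subset_Ici_self hr) hr
      rwa [hE0] at this
    exact ⟨fun r hr => mul_pos (hEpos r hr) (h1 r (Set.Ioi_subset_Ici_self hr)),
      fun _ => h2, fun h => absurd h (not_lt.2 hpos.le), fun r hr => (hEpos r hr).ne'⟩
end
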